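/- arXiv:2410.18682 — 3 statements merged into one kernel-verified Lean document; each statement's English description precedes it below -/
import Mathlib

section
/- Let μ be a finite positive Borel measure on [0,1) and suppose there is a constant C such that (1-r²)·∫₀¹ 2t²/(1-tr)² dμ(t) ≤ C for all r ∈ (0,1). Then μ is a Carleson measure, i.e., there exists C' > 0 with μ([r,1)) ≤ C'(1-r) for all r ∈ [0,1). -/
open MeasureTheory

theorem stmt_12 (μ : Measure ℝ) [IsFiniteMeasure μ] (C : ℝ)
    (h : ∀ r ∈ Set.Ioo (0:ℝ) 1,
      (1 - r ^ 2) * ∫ t in Set.Ico (0:ℝ) 1, 2 * t ^ 2 / (1 - t * r) ^ 2 ∂μ ≤ C) :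
    ∃ C' > 0, ∀ r ∈ Set.Ico (0:ℝ) 1, (μ (Set.Ico r 1)).toReal ≤ C' * (1 - r) := by
  set M := (μ Set.univ).toReal with hMdef
  have hM0 : 0 ≤ M := ENNReal.toReal_nonneg
  have hC0 : 0 ≤ C := by
    have hkey := h (1/2) ⟨by norm_num, by norm_num⟩
    have hnn : 0 ≤ ∫ t in Set.Ico (0:ℝ) 1, 2 * t ^ 2 / (1 - t * (1/2)) ^ 2 ∂μ := by
      apply integral_nonneg
      intro t
      positivity
    nlinarith
  have hmax : 0 ≤ max (4*C) (2*M) := le_max_of_le_left (by linarith)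
  refine ⟨max (4*C) (2*M) + 1, by linarith, ?_⟩
  intro r hr
  obtain ⟨hr0, hr1⟩ := hr
  have hm0 : 0 ≤ (μ (Set.Ico r 1)).toReal := ENNReal.toReal_nonneg
  by_cases hhalf : r < 1/2
  · have h1 : (μ (Set.Ico r 1)).toReal ≤ M :=
      ENNReal.toReal_mono (measure_ne_top μ _) (measure_mono (Set.subset_univ _))
    have h2 : 2*M ≤ max (4*C) (2*M) + 1 := by
      have := le_max_right (4*C) (2*M); linarith
    nlinarith
  · push_neg at hhalf
    have hrpos : 0 < r := by linarith
    have key := h r ⟨hrpos, hr1⟩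
    set f : ℝ → ℝ := fun t => 2 * t ^ 2 / (1 - t * r) ^ 2 with hf
    have hcont : ContinuousOn f (Set.Icc 0 1) := by
      apply ContinuousOn.div (by fun_prop) (by fun_prop)
      intro t ht
      have h1 : 0 < 1 - t * r := by nlinarith [ht.1, ht.2]
      exact ne_of_gt (pow_pos h1 2)
    have hint : IntegrableOn f (Set.Ico 0 1) μ :=
      (hcont.integrableOn_compact isCompact_Icc).mono_set Set.Ico_subset_Icc_self
    set c : ℝ := 2 * r ^ 2 / (1 - r ^ 2) ^ 2 with hc
    have hr2 : (0:ℝ) < 1 - r ^ 2 := by nlinarith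
    have hlb : ∀ t ∈ Set.Ico r 1, c ≤ f t := by
      intro t ht
      obtain ⟨ht1, ht2⟩ := ht
      have htr : 0 < 1 - t * r := by nlinarith
      have ha : 1 - t * r ≤ 1 - r ^ 2 := by
        nlinarith [mul_nonneg (sub_nonneg.2 ht1) hrpos.le]
      have h1 : (1 - t * r) ^ 2 ≤ (1 - r ^ 2) ^ 2 := pow_le_pow_left₀ htr.le ha 2
      have h2 : 2 * r ^ 2 ≤ 2 * t ^ 2 := by nlinarith
      exact div_le_div₀ (by positivity) h2 (by positivity) h1
    have hstep1 : c * (μ (Set.Ico r 1)).toReal ≤ ∫ t in Set.Ico r 1, f t ∂μ :=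
      setIntegral_ge_of_const_le_real measurableSet_Ico (measure_ne_top μ _) hlb
        (hint.mono_set (Set.Ico_subset_Ico_left (by linarith)))
    have hstep2 : ∫ t in Set.Ico r 1, f t ∂μ ≤ ∫ t in Set.Ico (0:ℝ) 1, f t ∂μ := by
      apply setIntegral_mono_set hint
      · filter_upwards with t
        dsimp [f]
        positivity
      · exact (Set.Ico_subset_Ico_left (by linarith)).eventuallyLE
    have hI : c * (μ (Set.Ico r 1)).toReal ≤ ∫ t in Set.Ico (0:ℝ) 1, f t ∂μ :=
      le_trans hstep1 hstep2
    have hkey2 : (1 - r ^ 2) * (c * (μ (Set.Ico r 1)).toReal) ≤ C :=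
      le_trans (by nlinarith [hI]) key
    have hcc : c * (1 - r ^ 2) ^ 2 = 2 * r ^ 2 := by
      rw [hc, div_mul_cancel₀ _ (pow_pos hr2 2).ne']
    -- multiply hkey2 by (1 - r^2) > 0
    have hkey3 : 2 * r ^ 2 * (μ (Set.Ico r 1)).toReal ≤ C * (1 - r ^ 2) := by
      nlinarith [hkey2, hcc, hm0, hr2]
    have h2 : 4*C ≤ max (4*C) (2*M) + 1 := by
      have := le_max_left (4*C) (2*M); linarith
    nlinarith [hkey3, hm0, mul_le_mul_of_nonneg_right h2 (show (0:ℝ) ≤ 1 - r by linarith),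
      mul_nonneg hm0 (show (0:ℝ) ≤ 2 * r ^ 2 - 1/2 by nlinarith),
      mul_nonneg (mul_nonneg hC0 (show (0:ℝ) ≤ 1 - r by linarith)) (show (0:ℝ) ≤ 1 - r by linarith)]
end

section
/- Let 1 ≤ q < ∞ and let (μ_n) be a nonincreasing sequence of nonnegative reals. Then ∑_{n=1}^∞ (n+1)^{q-2} μ_n^q < ∞ if and only if ∑_{n=1}^∞ 2^{-nq} (∑_{k=2ⁿ}^{2^{n+1}-1} (k+1)^{1-1/q} μ_k)^q < ∞. -/
open Finset

private lemma sum_blocks13 (f : ℕ → ℝ) (N : ℕ) :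
    ∑ n ∈ range N, ∑ k ∈ Ico (2^n) (2^(n+1)), f k = ∑ k ∈ Ico 1 (2^N), f k := by
  induction N with
  | zero => simp
  | succ N ih =>
    rw [Finset.sum_range_succ, ih, Finset.sum_Ico_consecutive]
    · exact Nat.one_le_two_pow
    · exact Nat.pow_le_pow_right (by norm_num) (Nat.le_succ N)

private lemma summable_blocks13 (f : ℕ → ℝ) (hf : ∀ n, 0 ≤ f n) :
    Summable f ↔ Summable (fun n => ∑ k ∈ Ico (2^n) (2^(n+1)), f k) := by
  constructor
  · intro h
    apply summable_of_sum_range_le (c := ∑' k, f k)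
      (fun n => Finset.sum_nonneg fun k _ => hf k)
    intro N
    rw [sum_blocks13]
    exact Summable.sum_le_tsum _ (fun k _ => hf k) h
  · intro h
    apply summable_of_sum_range_le
      (c := f 0 + ∑' n, ∑ k ∈ Ico (2^n) (2^(n+1)), f k) hf
    intro N
    calc ∑ k ∈ range N, f k ≤ ∑ k ∈ range (2^N), f k := by
          apply Finset.sum_le_sum_of_subset_of_nonneg
          · exact Finset.range_subset_range.2 (Nat.lt_two_pow_self (n := N)).le
          · intro k _ _; exact hf k
      _ = f 0 + ∑ k ∈ Ico 1 (2^N), f k := by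
          rw [Finset.range_eq_Ico, Finset.sum_eq_sum_Ico_succ_bot (Nat.two_pow_pos N)]
      _ = f 0 + ∑ n ∈ range N, ∑ k ∈ Ico (2^n) (2^(n+1)), f k := by rw [sum_blocks13]
      _ ≤ _ := by
          gcongr
          exact Summable.sum_le_tsum _ (fun n _ => Finset.sum_nonneg fun k _ => hf k) h

private lemma summable_compare13 {A S : ℕ → ℝ} (hA : ∀ n, 0 ≤ A n) (hS : ∀ n, 0 ≤ S n)
    {C C' : ℝ} (h1 : ∀ n, S n ≤ C * A n) (h2 : ∀ n, A (n+1) ≤ C' * S n) :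
    Summable S ↔ Summable A := by
  constructor
  · intro h
    rw [← summable_nat_add_iff 1]
    exact Summable.of_nonneg_of_le (fun n => hA _) h2 (h.mul_left C')
  · intro h
    exact Summable.of_nonneg_of_le hS h1 (h.mul_left C)

private lemma rpow_interval_upper13 {a x r : ℝ} (ha : 0 < a) (h1 : a ≤ x) (h2 : x ≤ 2*a) :
    x ^ r ≤ 2 ^ |r| * a ^ r := by
  have h2r : (1:ℝ) ≤ 2 ^ |r| := by
    calc (1:ℝ) = 2 ^ (0:ℝ) := (Real.rpow_zero 2).symm
    _ ≤ 2 ^ |r| := Real.rpow_le_rpow_of_exponent_le one_le_two (abs_nonneg r)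
  rcases le_or_gt 0 r with hr | hr
  · calc x ^ r ≤ (2*a) ^ r := Real.rpow_le_rpow (ha.le.trans h1) h2 hr
      _ = 2 ^ r * a ^ r := Real.mul_rpow (by norm_num) ha.le
      _ ≤ 2 ^ |r| * a ^ r := by
          gcongr
          · exact one_le_two
          · exact le_abs_self r
  · calc x ^ r ≤ a ^ r := Real.rpow_le_rpow_of_nonpos ha h1 hr.le
      _ ≤ 2 ^ |r| * a ^ r := le_mul_of_one_le_left (Real.rpow_nonneg ha.le r) h2r

private lemma rpow_interval_lower13 {a x r : ℝ} (ha : 0 < a) (h1 : a ≤ x) (h2 : x ≤ 2*a) :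
    2 ^ (-|r|) * a ^ r ≤ x ^ r := by
  rcases le_or_gt 0 r with hr | hr
  · have h2r : (2:ℝ) ^ (-|r|) ≤ 1 := by
      calc (2:ℝ) ^ (-|r|) ≤ 2 ^ (0:ℝ) :=
            Real.rpow_le_rpow_of_exponent_le one_le_two (neg_nonpos.2 (abs_nonneg r))
        _ = 1 := Real.rpow_zero 2
    calc (2:ℝ) ^ (-|r|) * a ^ r ≤ 1 * a ^ r := by
          gcongr
      _ = a ^ r := one_mul _
      _ ≤ x ^ r := Real.rpow_le_rpow ha.le h1 hr
  · have : (2:ℝ) ^ (-|r|) = 2 ^ r := by rw [abs_of_neg hr, neg_neg]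
    rw [this]
    calc (2:ℝ) ^ r * a ^ r = (2*a) ^ r := (Real.mul_rpow (by norm_num) ha.le).symm
      _ ≤ x ^ r := Real.rpow_le_rpow_of_nonpos (lt_of_lt_of_le ha h1) h2 hr.le

private lemma hc13 (m : ℕ) : ((2^m : ℕ) : ℝ) = (2:ℝ) ^ (m:ℝ) := by
  rw [Nat.cast_pow, Nat.cast_ofNat, Real.rpow_natCast]

section bounds
variable (q : ℝ) (hq : 1 ≤ q) (μ : ℕ → ℝ) (hpos : ∀ n, 0 ≤ μ n) (hmono : Antitone μ) (n : ℕ)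

private lemma memb13 {k : ℕ} (hk : k ∈ Ico ((2:ℕ)^n) (2^(n+1))) :
    (2:ℝ)^(n:ℝ) ≤ (k:ℝ)+1 ∧ (k:ℝ)+1 ≤ 2*(2:ℝ)^(n:ℝ) := by
  obtain ⟨hk1, hk2⟩ := Finset.mem_Ico.mp hk
  constructor
  · have h : ((2^n:ℕ):ℝ) ≤ (k:ℝ) := Nat.cast_le.mpr hk1
    rw [hc13] at h; linarith
  · have h : (k:ℝ)+1 ≤ ((2^(n+1):ℕ):ℝ) := by exact_mod_cast Nat.succ_le_of_lt hk2
    rw [hc13] at h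
    push_cast at h
    rwa [Real.rpow_add two_pos, Real.rpow_one, mul_comm] at h

include hq hpos hmono in
private lemma L1 :
    ∑ k ∈ Ico ((2:ℕ)^n) (2^(n+1)), ((k:ℝ)+1)^(q-2) * μ k ^ q
      ≤ 2^|q-2| * ((2:ℝ) ^ ((n:ℝ)*(q-1)) * μ (2^n) ^ q) := by
  have hq0 : (0:ℝ) < q := lt_of_lt_of_le one_pos hq
  have ha : (0:ℝ) < (2:ℝ)^((n:ℝ)) := Real.rpow_pos_of_pos two_pos _
  calc ∑ k ∈ Ico ((2:ℕ)^n) (2^(n+1)), ((k:ℝ)+1)^(q-2) * μ k ^ q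
      ≤ ∑ _k ∈ Ico ((2:ℕ)^n) (2^(n+1)),
          (2:ℝ)^|q-2| * ((2:ℝ)^(n:ℝ))^(q-2) * μ (2^n) ^ q := by
        apply Finset.sum_le_sum
        intro k hk
        obtain ⟨hx1, hx2⟩ := memb13 n hk
        have hk1 := (Finset.mem_Ico.mp hk).1
        exact mul_le_mul (rpow_interval_upper13 ha hx1 hx2)
          (Real.rpow_le_rpow (hpos k) (hmono hk1) hq0.le)
          (Real.rpow_nonneg (hpos k) q) (by positivity)
    _ = ((2^n : ℕ) : ℝ) * ((2:ℝ)^|q-2| * ((2:ℝ)^(n:ℝ))^(q-2) * μ (2^n) ^ q) := by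
        rw [Finset.sum_const, Nat.card_Ico, nsmul_eq_mul]
        congr 2
        rw [pow_succ]; omega
    _ = 2^|q-2| * ((2:ℝ) ^ ((n:ℝ)*(q-1)) * μ (2^n) ^ q) := by
        rw [hc13, show ((2:ℝ)^(n:ℝ))^(q-2) = 2^((n:ℝ)*(q-2)) from
          (Real.rpow_mul (by norm_num) _ _).symm,
          show (n:ℝ)*(q-1) = (n:ℝ) + (n:ℝ)*(q-2) by ring, Real.rpow_add two_pos]
        ring

include hq hpos hmono in
private lemma L2 :
    (2:ℝ) ^ (((n:ℝ)+1)*(q-1)) * μ (2^(n+1)) ^ q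
      ≤ 2^((q-1)+|q-2|) * ∑ k ∈ Ico ((2:ℕ)^n) (2^(n+1)), ((k:ℝ)+1)^(q-2) * μ k ^ q := by
  have hq0 : (0:ℝ) < q := lt_of_lt_of_le one_pos hq
  have ha : (0:ℝ) < (2:ℝ)^((n:ℝ)) := Real.rpow_pos_of_pos two_pos _
  have key : ((2^n : ℕ) : ℝ) * ((2:ℝ)^(-|q-2|) * ((2:ℝ)^(n:ℝ))^(q-2) * μ (2^(n+1)) ^ q)
      ≤ ∑ k ∈ Ico ((2:ℕ)^n) (2^(n+1)), ((k:ℝ)+1)^(q-2) * μ k ^ q := by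
    rw [show ((2^n : ℕ) : ℝ) * ((2:ℝ)^(-|q-2|) * ((2:ℝ)^(n:ℝ))^(q-2) * μ (2^(n+1)) ^ q)
        = ((Ico ((2:ℕ)^n) (2^(n+1)) : Finset ℕ).card : ℝ)
          * ((2:ℝ)^(-|q-2|) * ((2:ℝ)^(n:ℝ))^(q-2) * μ (2^(n+1)) ^ q) by
      rw [Nat.card_Ico]; congr 2; rw [pow_succ]; omega]
    rw [← nsmul_eq_mul]
    apply Finset.card_nsmul_le_sum
    intro k hk
    obtain ⟨hx1, hx2⟩ := memb13 n hk
    have hk2 := (Finset.mem_Ico.mp hk).2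
    exact mul_le_mul (rpow_interval_lower13 ha hx1 hx2)
      (Real.rpow_le_rpow (hpos _) (hmono hk2.le) hq0.le)
      (Real.rpow_nonneg (hpos _) q) (Real.rpow_nonneg (by positivity) _)
  calc (2:ℝ) ^ (((n:ℝ)+1)*(q-1)) * μ (2^(n+1)) ^ q
      = 2^((q-1)+|q-2|) * (((2^n : ℕ) : ℝ)
          * ((2:ℝ)^(-|q-2|) * ((2:ℝ)^(n:ℝ))^(q-2) * μ (2^(n+1)) ^ q)) := by
        rw [hc13, show ((2:ℝ)^(n:ℝ))^(q-2) = 2^((n:ℝ)*(q-2)) from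
          (Real.rpow_mul (by norm_num) _ _).symm,
          show ((n:ℝ)+1)*(q-1) = ((q-1)+|q-2|) + ((n:ℝ) + (-|q-2| + (n:ℝ)*(q-2))) by ring,
]
        simp only [Real.rpow_add (show (0:ℝ)<2 by norm_num)]
        ring
    _ ≤ _ := mul_le_mul_of_nonneg_left key (Real.rpow_nonneg (by norm_num) _)

include hq hpos hmono in
private lemma L3 :
    (2:ℝ) ^ (-(n:ℝ) * q) *
        (∑ k ∈ Ico ((2:ℕ)^n) (2^(n+1)), ((k:ℝ)+1)^(1-1/q) * μ k) ^ q
      ≤ 2^(q-1) * ((2:ℝ) ^ ((n:ℝ)*(q-1)) * μ (2^n) ^ q) := by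
  have hq0 : (0:ℝ) < q := lt_of_lt_of_le one_pos hq
  have h1q : (0:ℝ) ≤ 1 - 1/q := by
    rw [sub_nonneg, div_le_one hq0]; exact hq
  have hqe : (1-1/q)*q = q-1 := by field_simp
  have h2 : (0:ℝ) < 2 := by norm_num
  have hB : (∑ k ∈ Ico ((2:ℕ)^n) (2^(n+1)), ((k:ℝ)+1)^(1-1/q) * μ k)
      ≤ ((2^n:ℕ):ℝ) * ((2*(2:ℝ)^(n:ℝ))^(1-1/q) * μ (2^n)) := by
    calc ∑ k ∈ Ico ((2:ℕ)^n) (2^(n+1)), ((k:ℝ)+1)^(1-1/q) * μ k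
        ≤ ∑ _k ∈ Ico ((2:ℕ)^n) (2^(n+1)), (2*(2:ℝ)^(n:ℝ))^(1-1/q) * μ (2^n) := by
          apply Finset.sum_le_sum
          intro k hk
          obtain ⟨hx1, hx2⟩ := memb13 n hk
          exact mul_le_mul (Real.rpow_le_rpow (by positivity) hx2 h1q)
            (hmono (Finset.mem_Ico.mp hk).1) (hpos k) (by positivity)
      _ = ((2^n:ℕ):ℝ) * ((2*(2:ℝ)^(n:ℝ))^(1-1/q) * μ (2^n)) := by
          rw [Finset.sum_const, Nat.card_Ico, nsmul_eq_mul]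
          congr 2
          rw [pow_succ]; omega
  have hBnn : (0:ℝ) ≤ ∑ k ∈ Ico ((2:ℕ)^n) (2^(n+1)), ((k:ℝ)+1)^(1-1/q) * μ k :=
    Finset.sum_nonneg fun k _ => mul_nonneg (Real.rpow_nonneg (by positivity) _) (hpos k)
  calc (2:ℝ) ^ (-(n:ℝ) * q) *
        (∑ k ∈ Ico ((2:ℕ)^n) (2^(n+1)), ((k:ℝ)+1)^(1-1/q) * μ k) ^ q
      ≤ (2:ℝ) ^ (-(n:ℝ) * q) *
          (((2^n:ℕ):ℝ) * ((2*(2:ℝ)^(n:ℝ))^(1-1/q) * μ (2^n))) ^ q := by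
        exact mul_le_mul_of_nonneg_left (Real.rpow_le_rpow hBnn hB hq0.le)
          (Real.rpow_nonneg (by norm_num) _)
    _ = (2:ℝ) ^ (-(n:ℝ) * q) *
          ((2:ℝ)^((n:ℝ)*q) * ((2:ℝ)^(((n:ℝ)+1)*(q-1)) * μ (2^n) ^ q)) := by
        rw [Real.mul_rpow (show (0:ℝ) ≤ ((2^n:ℕ):ℝ) by positivity)
            (mul_nonneg (Real.rpow_nonneg (by positivity) _) (hpos _)),
          Real.mul_rpow (Real.rpow_nonneg (by positivity) _) (hpos _),
          hc13, ← Real.rpow_mul (by norm_num),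
          ← Real.rpow_mul (show (0:ℝ) ≤ 2*(2:ℝ)^(n:ℝ) by positivity), hqe,
          show 2*(2:ℝ)^(n:ℝ) = (2:ℝ)^((n:ℝ)+1) by
            rw [Real.rpow_add h2, Real.rpow_one]; ring,
          ← Real.rpow_mul (by norm_num)]
    _ = (2:ℝ)^(-(n:ℝ)*q + ((n:ℝ)*q + ((n:ℝ)+1)*(q-1))) * μ (2^n) ^ q := by
        simp only [Real.rpow_add h2]; ring
    _ = (2:ℝ)^((q-1) + (n:ℝ)*(q-1)) * μ (2^n) ^ q := by
        rw [show -(n:ℝ)*q + ((n:ℝ)*q + ((n:ℝ)+1)*(q-1)) = (q-1) + (n:ℝ)*(q-1) by ring]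
    _ = 2^(q-1) * ((2:ℝ) ^ ((n:ℝ)*(q-1)) * μ (2^n) ^ q) := by
        rw [Real.rpow_add h2]; ring

include hq hpos hmono in
private lemma L4 :
    (2:ℝ) ^ (((n:ℝ)+1)*(q-1)) * μ (2^(n+1)) ^ q
      ≤ 2^(q-1) * ((2:ℝ) ^ (-(n:ℝ) * q) *
        (∑ k ∈ Ico ((2:ℕ)^n) (2^(n+1)), ((k:ℝ)+1)^(1-1/q) * μ k) ^ q) := by
  have hq0 : (0:ℝ) < q := lt_of_lt_of_le one_pos hq
  have h1q : (0:ℝ) ≤ 1 - 1/q := by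
    rw [sub_nonneg, div_le_one hq0]; exact hq
  have hqe : (1-1/q)*q = q-1 := by field_simp
  have h2 : (0:ℝ) < 2 := by norm_num
  have hB : ((2^n:ℕ):ℝ) * (((2:ℝ)^(n:ℝ))^(1-1/q) * μ (2^(n+1)))
      ≤ ∑ k ∈ Ico ((2:ℕ)^n) (2^(n+1)), ((k:ℝ)+1)^(1-1/q) * μ k := by
    rw [show ((2^n:ℕ):ℝ) = ((Ico ((2:ℕ)^n) (2^(n+1))).card : ℝ) by
      rw [Nat.card_Ico]; congr 1; rw [pow_succ]; omega, ← nsmul_eq_mul]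
    apply Finset.card_nsmul_le_sum
    intro k hk
    obtain ⟨hx1, hx2⟩ := memb13 n hk
    exact mul_le_mul (Real.rpow_le_rpow (by positivity) hx1 h1q)
      (hmono (Finset.mem_Ico.mp hk).2.le) (hpos _) (by positivity)
  have hLnn : (0:ℝ) ≤ ((2^n:ℕ):ℝ) * (((2:ℝ)^(n:ℝ))^(1-1/q) * μ (2^(n+1))) := by
    have := hpos (2^(n+1)); positivity
  calc (2:ℝ) ^ (((n:ℝ)+1)*(q-1)) * μ (2^(n+1)) ^ q
      = 2^(q-1) * ((2:ℝ) ^ (-(n:ℝ) * q) *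
          (((2^n:ℕ):ℝ) * (((2:ℝ)^(n:ℝ))^(1-1/q) * μ (2^(n+1)))) ^ q) := by
        rw [Real.mul_rpow (show (0:ℝ) ≤ ((2^n:ℕ):ℝ) by positivity)
            (mul_nonneg (Real.rpow_nonneg (by positivity) _) (hpos _)),
          Real.mul_rpow (Real.rpow_nonneg (by positivity) _) (hpos _),
          hc13, ← Real.rpow_mul (by norm_num),
          ← Real.rpow_mul (show (0:ℝ) ≤ (2:ℝ)^(n:ℝ) by positivity), hqe,
          ← Real.rpow_mul (by norm_num)]
        rw [show ((n:ℝ)+1)*(q-1) = (q-1) + (-(n:ℝ)*q + ((n:ℝ)*q + (n:ℝ)*(q-1))) by ring]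
        simp only [Real.rpow_add h2]
        ring
    _ ≤ _ := by
        apply mul_le_mul_of_nonneg_left _ (Real.rpow_nonneg (by norm_num) _)
        exact mul_le_mul_of_nonneg_left
          (Real.rpow_le_rpow hLnn hB hq0.le) (Real.rpow_nonneg (by norm_num) _)
end bounds

theorem stmt_13 (q : ℝ) (hq : 1 ≤ q) (μ : ℕ → ℝ) (hpos : ∀ n, 0 ≤ μ n)
    (hmono : Antitone μ) :
    Summable (fun n : ℕ => ((n:ℝ) + 1) ^ (q - 2) * μ n ^ q) ↔
    Summable (fun n : ℕ =>
      (2:ℝ) ^ (-(n:ℝ) * q) *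
        (∑ k ∈ Finset.Ico ((2:ℕ) ^ n) (2 ^ (n + 1)), ((k:ℝ) + 1) ^ (1 - 1 / q) * μ k) ^ q) := by
  have hq0 : (0:ℝ) < q := lt_of_lt_of_le one_pos hq
  set A : ℕ → ℝ := fun n => (2:ℝ) ^ ((n:ℝ)*(q-1)) * μ (2^n) ^ q with hA
  have hAnn : ∀ n, 0 ≤ A n := fun n =>
    mul_nonneg (Real.rpow_nonneg (by norm_num) _) (Real.rpow_nonneg (hpos _) _)
  have hf : ∀ k : ℕ, 0 ≤ ((k:ℝ) + 1) ^ (q - 2) * μ k ^ q := fun k =>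
    mul_nonneg (Real.rpow_nonneg (by positivity) _) (Real.rpow_nonneg (hpos _) _)
  have left : Summable (fun n : ℕ => ((n:ℝ) + 1) ^ (q - 2) * μ n ^ q) ↔ Summable A := by
    refine (summable_blocks13 _ hf).trans (summable_compare13 (C' := 2^((q-1)+|q-2|)) hAnn
      (fun n => Finset.sum_nonneg fun k _ => hf k) (fun n => L1 q hq μ hpos hmono n)
      (fun n => ?_))
    simp only [hA]
    push_cast
    exact L2 q hq μ hpos hmono n
  have right : Summable (fun n : ℕ =>
      (2:ℝ) ^ (-(n:ℝ) * q) *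
        (∑ k ∈ Finset.Ico ((2:ℕ) ^ n) (2 ^ (n + 1)), ((k:ℝ) + 1) ^ (1 - 1 / q) * μ k) ^ q)
      ↔ Summable A := by
    refine summable_compare13 (C' := 2^(q-1)) hAnn (fun n => mul_nonneg (Real.rpow_nonneg (by norm_num) _)
      (Real.rpow_nonneg (Finset.sum_nonneg fun k _ =>
        mul_nonneg (Real.rpow_nonneg (by positivity) _) (hpos k)) _))
      (fun n => L3 q hq μ hpos hmono n) (fun n => ?_)
    simp only [hA]
    push_cast
    exact L4 q hq μ hpos hmono n
  exact left.trans right.symm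
end

section
/- Let μ be a finite positive Borel measure on [0,1) that is a Carleson measure (μ([t,1)) ≤ C(1-t) for all t). Then sup_{0<r<1} (1-r²) ∫_{[0,1)} 1/(1-tr)² dμ(t) < ∞. -/
open MeasureTheory

theorem stmt_18 (μ : Measure ℝ) [IsFiniteMeasure μ] (C : ℝ) (hC : 0 < C)
    (hCar : ∀ t ∈ Set.Ico (0:ℝ) 1, (μ (Set.Ico t 1)).toReal ≤ C * (1 - t)) :
    ∃ M : ℝ, ∀ r ∈ Set.Ioo (0:ℝ) 1,
      (1 - r ^ 2) * ∫ t in Set.Ico (0:ℝ) 1, 1 / (1 - t * r) ^ 2 ∂μ ≤ M := by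
  refine ⟨5 * C, ?_⟩
  rintro r ⟨hr0, hr1⟩
  have h1r : (0:ℝ) < 1 - r := by linarith
  have h1r2 : (0:ℝ) < 1 - r ^ 2 := by nlinarith
  set G : ℝ → ENNReal := fun s => ENNReal.ofReal (2 * r / (1 - s * r) ^ 3) with hG
  have hGmeas : Measurable G := by
    apply Measurable.ennreal_ofReal
    exact measurable_const.div ((measurable_const.sub (measurable_id.mul_const r)).pow_const 3)
  -- positivity of denominators
  have hpos : ∀ x : ℝ, x < 1 → 0 ≤ x → 0 < 1 - x * r := by
    intro x hx1 hx0
    nlinarith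
  -- Step 1: the Bochner integral equals toReal of the lintegral
  have hfmeas : Measurable fun t : ℝ => 1 / (1 - t * r) ^ 2 := by
    simp_rw [one_div]
    exact ((measurable_const.sub (measurable_id.mul_const r)).pow_const 2).inv
  have hI : ∫ t in Set.Ico (0:ℝ) 1, 1 / (1 - t * r) ^ 2 ∂μ
      = (∫⁻ t in Set.Ico (0:ℝ) 1, ENNReal.ofReal (1 / (1 - t * r) ^ 2) ∂μ).toReal := by
    rw [integral_eq_lintegral_of_nonneg_ae]
    · exact Filter.Eventually.of_forall fun t => by positivity
    · exact hfmeas.aestronglyMeasurable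
  -- Step 2: pointwise FTC identity
  have hpt : ∀ t ∈ Set.Ico (0:ℝ) 1,
      ENNReal.ofReal (1 / (1 - t * r) ^ 2) = 1 + ∫⁻ s in Set.Ioc 0 t, G s := by
    rintro t ⟨ht0, ht1⟩
    have hcont : ContinuousOn (fun s : ℝ => 2 * r / (1 - s * r) ^ 3) (Set.uIcc 0 t) := by
      apply ContinuousOn.div continuousOn_const
      · fun_prop
      · intro x hx
        rw [Set.uIcc_of_le ht0] at hx
        have := hpos x (lt_of_le_of_lt hx.2 ht1) hx.1
        positivity
    have hint : IntervalIntegrable (fun s : ℝ => 2 * r / (1 - s * r) ^ 3) volume 0 t :=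
      hcont.intervalIntegrable
    have hftc : ∫ s in (0:ℝ)..t, 2 * r / (1 - s * r) ^ 3
        = 1 / (1 - t * r) ^ 2 - 1 / (1 - 0 * r) ^ 2 := by
      refine intervalIntegral.integral_eq_sub_of_hasDerivAt
        (f := fun s : ℝ => 1 / (1 - s * r) ^ 2) (fun x hx => ?_) hint
      rw [Set.uIcc_of_le ht0] at hx
      have hx1 : 0 < 1 - x * r := hpos x (lt_of_le_of_lt hx.2 ht1) hx.1
      have h1 : HasDerivAt (fun s : ℝ => 1 - s * r) (-r) x := by
        simpa using ((hasDerivAt_id x).mul_const r).const_sub 1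
      have h2 : HasDerivAt (fun s : ℝ => (1 - s * r) ^ 2)
          ((2 : ℕ) * (1 - x * r) ^ (2 - 1) * (-r)) x := h1.pow 2
      have h3 := h2.inv (by positivity)
      simp only [Pi.inv_def] at h3
      simp_rw [one_div]
      refine h3.congr_deriv ?_
      push_cast
      field_simp
    have hJval : ∫ s in Set.Ioc 0 t, 2 * r / (1 - s * r) ^ 3
        = 1 / (1 - t * r) ^ 2 - 1 := by
      rw [← intervalIntegral.integral_of_le ht0, hftc]; norm_num
    have hJnn : 0 ≤ ∫ s in Set.Ioc 0 t, 2 * r / (1 - s * r) ^ 3 := by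
      apply setIntegral_nonneg measurableSet_Ioc
      intro x hx
      have := hpos x (lt_of_le_of_lt hx.2 ht1) hx.1.le
      positivity
    have heq1 : (1 : ℝ) / (1 - t * r) ^ 2
        = 1 + ∫ s in Set.Ioc 0 t, 2 * r / (1 - s * r) ^ 3 := by linarith
    rw [heq1, ENNReal.ofReal_add (by norm_num) hJnn, ENNReal.ofReal_one]
    congr 1
    rw [ofReal_integral_eq_lintegral_ofReal hint.1]
    refine (ae_restrict_iff' measurableSet_Ioc).2 (Filter.Eventually.of_forall fun x hx => ?_)
    have := hpos x (lt_of_le_of_lt hx.2 ht1) hx.1.le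
    positivity
  -- Step 3: rewrite the lintegral and swap
  have hL : (∫⁻ t in Set.Ico (0:ℝ) 1, ENNReal.ofReal (1 / (1 - t * r) ^ 2) ∂μ)
      ≤ μ (Set.Ico (0:ℝ) 1)
        + ∫⁻ s, ∫⁻ t in Set.Ico (0:ℝ) 1, (Set.Ioc 0 t).indicator G s ∂μ := by
    have hre : (∫⁻ t in Set.Ico (0:ℝ) 1, ENNReal.ofReal (1 / (1 - t * r) ^ 2) ∂μ)
        = ∫⁻ t in Set.Ico (0:ℝ) 1, (1 + ∫⁻ s, (Set.Ioc 0 t).indicator G s) ∂μ := by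
      refine setLIntegral_congr_fun measurableSet_Ico ?_
      intro t ht
      dsimp only
      rw [hpt t ht, lintegral_indicator measurableSet_Ioc]
    rw [hre, lintegral_add_left measurable_const, setLIntegral_one]
    refine add_le_add_right (le_of_eq ?_) _
    have hmeasP : AEMeasurable (fun p : ℝ × ℝ => (Set.Ioc 0 p.1).indicator G p.2)
        ((μ.restrict (Set.Ico 0 1)).prod volume) := by
      have heqP : (fun p : ℝ × ℝ => (Set.Ioc 0 p.1).indicator G p.2)
          = ({p : ℝ × ℝ | 0 < p.2} ∩ {p : ℝ × ℝ | p.2 ≤ p.1}).indicator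
              (fun p => G p.2) := by
        funext p
        by_cases h1 : 0 < p.2 <;> by_cases h2 : p.2 ≤ p.1 <;>
          simp [Set.indicator_apply, Set.mem_Ioc, h1, h2]
      rw [heqP]
      exact ((hGmeas.comp measurable_snd).indicator
        ((measurableSet_lt measurable_const measurable_snd).inter
          (measurableSet_le measurable_snd measurable_fst))).aemeasurable
    exact lintegral_lintegral_swap hmeasP
  -- Step 4: bound the inner integral using the Carleson condition
  have hinner : ∀ s : ℝ, (∫⁻ t in Set.Ico (0:ℝ) 1, (Set.Ioc 0 t).indicator G s ∂μ)
      ≤ (Set.Ioo (0:ℝ) 1).indicator (fun s => ENNReal.ofReal (2 * C / (1 - s * r) ^ 2)) s := by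
    intro s
    by_cases hs : s ∈ Set.Ioo (0:ℝ) 1
    · obtain ⟨hs0, hs1⟩ := hs
      have hsr : 0 < 1 - s * r := hpos s hs1 hs0.le
      have heq : ∀ t ∈ Set.Ico (0:ℝ) 1, (Set.Ioc 0 t).indicator G s
          = (Set.Ici s).indicator (fun _ => G s) t := by
        intro t ht
        by_cases h : s ≤ t <;>
          simp [Set.indicator_apply, Set.mem_Ioc, Set.mem_Ici, h, hs0]
      rw [setLIntegral_congr_fun measurableSet_Ico heq,
        lintegral_indicator_const measurableSet_Ici, Measure.restrict_apply measurableSet_Ici]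
      have hset : Set.Ici s ∩ Set.Ico (0:ℝ) 1 = Set.Ico s 1 := by
        ext x
        simp only [Set.mem_inter_iff, Set.mem_Ici, Set.mem_Ico]
        constructor
        · rintro ⟨h1, _, h3⟩; exact ⟨h1, h3⟩
        · rintro ⟨h1, h2⟩; exact ⟨h1, by linarith, h2⟩
      rw [hset, Set.indicator_of_mem (show s ∈ Set.Ioo (0:ℝ) 1 from ⟨hs0, hs1⟩)]
      have hμs : μ (Set.Ico s 1) ≤ ENNReal.ofReal (C * (1 - s)) := by
        rw [← ENNReal.ofReal_toReal (measure_ne_top μ _)]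
        exact ENNReal.ofReal_le_ofReal (hCar s ⟨hs0.le, hs1⟩)
      calc G s * μ (Set.Ico s 1)
          ≤ ENNReal.ofReal (2 * r / (1 - s * r) ^ 3) * ENNReal.ofReal (C * (1 - s)) :=
            mul_le_mul_right hμs _
        _ = ENNReal.ofReal (2 * r / (1 - s * r) ^ 3 * (C * (1 - s))) :=
            (ENNReal.ofReal_mul (by positivity)).symm
        _ ≤ ENNReal.ofReal (2 * C / (1 - s * r) ^ 2) := by
            apply ENNReal.ofReal_le_ofReal
            have hru : r * (1 - s) ≤ 1 - s * r := by nlinarith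
            rw [div_mul_eq_mul_div, div_le_div_iff₀ (by positivity) (by positivity)]
            nlinarith [mul_le_mul_of_nonneg_left hru
              (by positivity : (0:ℝ) ≤ 2 * C * (1 - s * r) ^ 2)]
    · have hzero : ∀ t ∈ Set.Ico (0:ℝ) 1, (Set.Ioc 0 t).indicator G s = (fun _ => (0:ENNReal)) t := by
        intro t ht
        apply Set.indicator_of_notMem
        rw [Set.mem_Ioc]
        rintro ⟨h1, h2⟩
        exact hs ⟨h1, lt_of_le_of_lt h2 ht.2⟩
      rw [setLIntegral_congr_fun measurableSet_Ico hzero,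
        lintegral_zero]
      exact zero_le
  -- Step 5: compute the outer integral
  have houter : (∫⁻ s, (Set.Ioo (0:ℝ) 1).indicator
        (fun s => ENNReal.ofReal (2 * C / (1 - s * r) ^ 2)) s)
      ≤ ENNReal.ofReal (2 * C / (1 - r)) := by
    rw [lintegral_indicator measurableSet_Ioo]
    have hposI : ∀ x ∈ Set.Icc (0:ℝ) 1, 0 < 1 - x * r := by
      intro x hx; nlinarith [hx.1, hx.2]
    have hcont : ContinuousOn (fun s : ℝ => 2 * C / (1 - s * r) ^ 2) (Set.Icc 0 1) := by
      apply ContinuousOn.div continuousOn_const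
      · fun_prop
      · intro x hx
        have := hposI x hx
        positivity
    have hintg : IntegrableOn (fun s : ℝ => 2 * C / (1 - s * r) ^ 2) (Set.Ioo 0 1) volume :=
      (hcont.integrableOn_Icc).mono_set Set.Ioo_subset_Icc_self
    rw [← ofReal_integral_eq_lintegral_ofReal hintg
      (Filter.Eventually.of_forall fun x => by positivity)]
    apply ENNReal.ofReal_le_ofReal
    have hIoo : ∫ s in Set.Ioo (0:ℝ) 1, 2 * C / (1 - s * r) ^ 2
        = ∫ s in (0:ℝ)..1, 2 * C / (1 - s * r) ^ 2 := by
      rw [intervalIntegral.integral_of_le (by norm_num : (0:ℝ) ≤ 1),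
        integral_Ioc_eq_integral_Ioo]
    have hftc : ∫ s in (0:ℝ)..1, 2 * C / (1 - s * r) ^ 2
        = 2 * C / (r * (1 - 1 * r)) - 2 * C / (r * (1 - 0 * r)) := by
      refine intervalIntegral.integral_eq_sub_of_hasDerivAt
        (f := fun s : ℝ => 2 * C / (r * (1 - s * r))) (fun x hx => ?_) ?_
      · rw [Set.uIcc_of_le (by norm_num : (0:ℝ) ≤ 1)] at hx
        have hx1 : 0 < 1 - x * r := hposI x hx
        have h1 : HasDerivAt (fun s : ℝ => r * (1 - s * r)) (r * (-r)) x := by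
          simpa using (((hasDerivAt_id x).mul_const r).const_sub 1).const_mul r
        have h2 := HasDerivAt.const_mul (2 * C) (h1.inv (by positivity : r * (1 - x * r) ≠ 0))
        have heqf : (fun y : ℝ => 2 * C * (fun s : ℝ => r * (1 - s * r))⁻¹ y)
            = fun s : ℝ => 2 * C / (r * (1 - s * r)) := by
          funext y; rw [Pi.inv_apply, div_eq_mul_inv]
        rw [heqf] at h2
        refine h2.congr_deriv ?_
        field_simp
      · apply ContinuousOn.intervalIntegrable
        apply ContinuousOn.div continuousOn_const
        · fun_prop
        · intro x hx
          rw [Set.uIcc_of_le (by norm_num : (0:ℝ) ≤ 1)] at hx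
          have := hposI x hx
          positivity
    have hval : 2 * C / (r * (1 - 1 * r)) - 2 * C / (r * (1 - 0 * r)) = 2 * C / (1 - r) := by
      field_simp
      ring
    rw [hIoo, hftc, hval]
  -- Step 6: the measure bound
  have hmu : μ (Set.Ico (0:ℝ) 1) ≤ ENNReal.ofReal C := by
    have h0 := hCar 0 (by constructor <;> norm_num)
    rw [← ENNReal.ofReal_toReal (measure_ne_top μ _)]
    exact ENNReal.ofReal_le_ofReal (by linarith)
  -- Assemble
  have hLfin : (∫⁻ t in Set.Ico (0:ℝ) 1, ENNReal.ofReal (1 / (1 - t * r) ^ 2) ∂μ)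
      ≤ ENNReal.ofReal (C + 2 * C / (1 - r)) := by
    refine le_trans hL ?_
    have : (∫⁻ s, ∫⁻ t in Set.Ico (0:ℝ) 1, (Set.Ioc 0 t).indicator G s ∂μ)
        ≤ ENNReal.ofReal (2 * C / (1 - r)) :=
      le_trans (lintegral_mono hinner) houter
    calc μ (Set.Ico (0:ℝ) 1) + _ ≤ ENNReal.ofReal C + ENNReal.ofReal (2 * C / (1 - r)) :=
          add_le_add hmu this
      _ = ENNReal.ofReal (C + 2 * C / (1 - r)) := by
          rw [← ENNReal.ofReal_add hC.le (by positivity)]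
  rw [hI]
  have hIle : (∫⁻ t in Set.Ico (0:ℝ) 1, ENNReal.ofReal (1 / (1 - t * r) ^ 2) ∂μ).toReal
      ≤ C + 2 * C / (1 - r) := ENNReal.toReal_le_of_le_ofReal (by positivity) hLfin
  have hIge : (0:ℝ) ≤ (∫⁻ t in Set.Ico (0:ℝ) 1, ENNReal.ofReal (1 / (1 - t * r) ^ 2) ∂μ).toReal :=
    ENNReal.toReal_nonneg
  calc (1 - r ^ 2) * _ ≤ (1 - r ^ 2) * (C + 2 * C / (1 - r)) := by
        exact mul_le_mul_of_nonneg_left hIle h1r2.le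
    _ ≤ 5 * C := by
        have heq : (1 - r ^ 2) * (C + 2 * C / (1 - r)) = (1 - r ^ 2) * C + 2 * C * (1 + r) := by
          field_simp
          ring
        rw [heq]
        nlinarith
end
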